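/- Let T > 0, N₀ ∈ ℕ, C > 0, and for each ε ∈ (0, 1] let m_ε : ℝ → ℝ be continuous with 0 ≤ m_ε(x) ≤ C ε^{-N₀} for all x, and let u_ε be a classical solution on [0, T] of the wave equation with potential m_ε and source f = 0, all with the same ε-independent initial data u_ε(0, ·) = u₀ and ∂_t u_ε(0, ·) = u₁, where u₀ is C¹ with compact support and u₁ is continuous with compact support. Then there exists c > 0 such that for all ε ∈ (0, 1] and all t ∈ [0, T]: ∫_ℝ (∂_t u_ε(t,x))² dx + ∫_ℝ (∂_x u_ε(t,x))² dx ≤ c ε^{-N₀}; that is, the net of solutions is moderate. -/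

import Mathlib

/-!
Multiply the equation `vₜₜ = vₓₓ - m v` by `vₜ`: the energy density `vₜ² + vₓ² + m v²` then
satisfies the conservation law `∂ₜ (vₜ² + vₓ² + m v²) = ∂ₓ (2 vₜ vₓ)`, and since the flux
vanishes outside the support, the energy `E(t) = ∫ (vₜ² + vₓ² + m v²) dx` is constant in time.
For `m ≥ 0` it dominates `‖vₜ‖² + ‖vₓ‖²`, and at `t = 0` it equals
`‖u₁‖² + ‖u₀'‖² + ∫ m u₀² ≤ ‖u₁‖² + ‖u₀'‖² + C ε^{-N₀} ‖u₀‖²`, which is `O(ε^{-N₀})`.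
-/

open MeasureTheory

/-- A classical solution on `[0,T]` of the wave equation with potential `m`
and source `f`: a `C²` function `u : ℝ × ℝ → ℝ` vanishing for `|x| ≥ R`
(for some `R > 0`) when `t ∈ [0,T]`, satisfying
`∂_t² u = ∂_x² u − m(x) u + f(t,x)` on `[0,T] × ℝ`. -/
def IsClassicalSolution (T : ℝ) (m : ℝ → ℝ) (f : ℝ → ℝ → ℝ) (u : ℝ → ℝ → ℝ) : Prop :=
  ContDiff ℝ 2 (fun p : ℝ × ℝ => u p.1 p.2) ∧
  (∃ R > (0 : ℝ), ∀ t ∈ Set.Icc (0 : ℝ) T, ∀ x : ℝ, R ≤ |x| → u t x = 0) ∧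
  ∀ t ∈ Set.Icc (0 : ℝ) T, ∀ x : ℝ,
    iteratedDeriv 2 (fun τ => u τ x) t =
      iteratedDeriv 2 (fun y => u t y) x - m x * u t x + f t x

open Set Function Interval

section Calculus

variable {E : Type*} [NormedAddCommGroup E] [NormedSpace ℝ E]

theorem intervalIntegral_intervalIntegral_swap {f : ℝ → ℝ → E} (hf : Continuous (uncurry f))
    (a b c d : ℝ) :
    ∫ x in a..b, ∫ y in c..d, f x y = ∫ y in c..d, ∫ x in a..b, f x y := by
  have hint :
      Integrable (uncurry f) ((volume.restrict (Ι a b)).prod (volume.restrict (Ι c d))) := by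
    rw [Measure.prod_restrict]
    exact (hf.continuousOn.integrableOn_compact (isCompact_uIcc.prod isCompact_uIcc)).mono_set
      (prod_mono uIoc_subset_uIcc uIoc_subset_uIcc)
  simp only [intervalIntegral.intervalIntegral_eq_integral_uIoc, integral_smul]
  rw [integral_integral_swap hint, smul_comm]

theorem intervalIntegral_eq_of_hasDerivAt_of_hasDerivAt [CompleteSpace E] {e F g : ℝ → ℝ → E}
    {t₀ t₁ a b : ℝ}
    (he_cont : Continuous (uncurry e)) (hg : Continuous (uncurry g))
    (he : ∀ s ∈ uIcc t₀ t₁, ∀ x ∈ uIcc a b, HasDerivAt (e · x) (g s x) s)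
    (hF : ∀ s ∈ uIcc t₀ t₁, ∀ x ∈ uIcc a b, HasDerivAt (F s) (g s x) x)
    (hFab : ∀ s ∈ uIcc t₀ t₁, F s a = F s b) :
    ∫ x in a..b, e t₁ x = ∫ x in a..b, e t₀ x := by
  have hg_time (x : ℝ) : IntervalIntegrable (g · x) volume t₀ t₁ :=
    (hg.comp (continuous_id.prodMk continuous_const)).intervalIntegrable _ _
  have hg_space (s : ℝ) : IntervalIntegrable (g s) volume a b :=
    (hg.comp (continuous_const.prodMk continuous_id)).intervalIntegrable _ _
  have he_slice (s : ℝ) : IntervalIntegrable (e s) volume a b :=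
    (he_cont.comp (continuous_const.prodMk continuous_id)).intervalIntegrable _ _
  have h_time : ∀ x ∈ uIcc a b, ∫ s in t₀..t₁, g s x = e t₁ x - e t₀ x := fun x hx =>
    intervalIntegral.integral_eq_sub_of_hasDerivAt (fun s hs => he s hs x hx) (hg_time x)
  have h_space : ∀ s ∈ uIcc t₀ t₁, ∫ x in a..b, g s x = 0 := fun s hs => by
    rw [intervalIntegral.integral_eq_sub_of_hasDerivAt (hF s hs) (hg_space s), hFab s hs, sub_self]
  calc ∫ x in a..b, e t₁ x
      = (∫ x in a..b, e t₁ x - e t₀ x) + ∫ x in a..b, e t₀ x := by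
        rw [intervalIntegral.integral_sub (he_slice t₁) (he_slice t₀), sub_add_cancel]
    _ = (∫ x in a..b, ∫ s in t₀..t₁, g s x) + ∫ x in a..b, e t₀ x := by
        rw [intervalIntegral.integral_congr fun x hx => (h_time x hx).symm]
    _ = ∫ x in a..b, e t₀ x := by
        rw [intervalIntegral_intervalIntegral_swap (f := fun x s => g s x)
            (hg.comp continuous_swap),
          intervalIntegral.integral_congr h_space, intervalIntegral.integral_zero, zero_add]

end Calculus

theorem deriv_eq_zero_of_eqOn_zero {𝕜 F : Type*} [NontriviallyNormedField 𝕜] [NormedAddCommGroup F]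
    [NormedSpace 𝕜 F] {g : 𝕜 → F} {s : Set 𝕜} {x : 𝕜} (hg : DifferentiableAt 𝕜 g x)
    (hs : UniqueDiffWithinAt 𝕜 s x) (hx : x ∈ s) (h0 : EqOn g 0 s) : deriv g x = 0 := by
  rw [← hg.derivWithin hs, derivWithin_congr h0 (h0 hx), derivWithin_zero, Pi.zero_apply]

theorem uniqueDiffWithinAt_setOf_le_abs {R x : ℝ} (hx : R ≤ |x|) :
    UniqueDiffWithinAt ℝ {y | R ≤ |y|} x := by
  rcases le_abs.mp hx with hx | hx
  · exact (uniqueDiffOn_Ici R x hx).mono fun y (hy : R ≤ y) => le_abs.mpr (.inl hy)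
  · exact (uniqueDiffOn_Iic (-R) x (le_neg.mpr hx)).mono
      fun y (hy : y ≤ -R) => le_abs.mpr (.inr (le_neg.mpr hy))

theorem integrable_of_continuous_of_eq_zero_of_le_abs {E : Type*} [NormedAddCommGroup E]
    {f : ℝ → E} {R : ℝ} (hf : Continuous f) (h0 : ∀ x, R ≤ |x| → f x = 0) : Integrable f :=
  hf.integrable_of_hasCompactSupport <| HasCompactSupport.intro (isCompact_Icc (a := -R) (b := R))
    fun x hx => h0 x (not_le.mp fun h => hx (abs_le.mp h)).le

theorem integral_eq_intervalIntegral_of_eq_zero_of_le_abs {E : Type*} [NormedAddCommGroup E]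
    [NormedSpace ℝ E] {f : ℝ → E} {R : ℝ}
    (hR : 0 ≤ R) (hf : ∀ x, R ≤ |x| → f x = 0) : ∫ x, f x = ∫ x in -R..R, f x := by
  rw [intervalIntegral.integral_of_le (by linarith)]
  refine (setIntegral_eq_integral_of_forall_compl_eq_zero fun x hx => hf x ?_).symm
  exact not_lt.mp fun h => hx (Ioo_subset_Ioc_self (abs_lt.mp h))

noncomputable def timeDeriv (w : ℝ → ℝ → ℝ) (t x : ℝ) : ℝ := deriv (w · x) t

noncomputable def spaceDeriv (w : ℝ → ℝ → ℝ) (t x : ℝ) : ℝ := deriv (w t ·) x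

section PartialDerivatives

variable {w : ℝ → ℝ → ℝ} {t x : ℝ}

theorem hasDerivAt_fderiv_time (hw : DifferentiableAt ℝ (uncurry w) (t, x)) :
    HasDerivAt (w · x) (fderiv ℝ (uncurry w) (t, x) (1, 0)) t :=
  hw.hasFDerivAt.comp_hasDerivAt_of_eq t ((hasDerivAt_id t).prodMk (hasDerivAt_const t x)) rfl

theorem hasDerivAt_fderiv_space (hw : DifferentiableAt ℝ (uncurry w) (t, x)) :
    HasDerivAt (w t ·) (fderiv ℝ (uncurry w) (t, x) (0, 1)) x :=
  hw.hasFDerivAt.comp_hasDerivAt_of_eq x ((hasDerivAt_const x t).prodMk (hasDerivAt_id x)) rfl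

theorem timeDeriv_eq_fderiv (hw : DifferentiableAt ℝ (uncurry w) (t, x)) :
    timeDeriv w t x = fderiv ℝ (uncurry w) (t, x) (1, 0) :=
  (hasDerivAt_fderiv_time hw).deriv

theorem spaceDeriv_eq_fderiv (hw : DifferentiableAt ℝ (uncurry w) (t, x)) :
    spaceDeriv w t x = fderiv ℝ (uncurry w) (t, x) (0, 1) :=
  (hasDerivAt_fderiv_space hw).deriv

theorem hasDerivAt_timeDeriv (hw : DifferentiableAt ℝ (uncurry w) (t, x)) :
    HasDerivAt (w · x) (timeDeriv w t x) t :=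
  timeDeriv_eq_fderiv hw ▸ hasDerivAt_fderiv_time hw

theorem hasDerivAt_spaceDeriv (hw : DifferentiableAt ℝ (uncurry w) (t, x)) :
    HasDerivAt (w t ·) (spaceDeriv w t x) x :=
  spaceDeriv_eq_fderiv hw ▸ hasDerivAt_fderiv_space hw

theorem uncurry_timeDeriv (hw : Differentiable ℝ (uncurry w)) :
    uncurry (timeDeriv w) = fun p => fderiv ℝ (uncurry w) p (1, 0) :=
  funext fun p => timeDeriv_eq_fderiv (hw p)

theorem uncurry_spaceDeriv (hw : Differentiable ℝ (uncurry w)) :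
    uncurry (spaceDeriv w) = fun p => fderiv ℝ (uncurry w) p (0, 1) :=
  funext fun p => spaceDeriv_eq_fderiv (hw p)

theorem ContDiff.uncurry_timeDeriv {n : WithTop ℕ∞} (hw : ContDiff ℝ (n + 1) (uncurry w)) :
    ContDiff ℝ n (uncurry (timeDeriv w)) := by
  rw [_root_.uncurry_timeDeriv (hw.differentiable (by simp))]
  exact (hw.fderiv_right le_rfl).clm_apply contDiff_const

theorem ContDiff.uncurry_spaceDeriv {n : WithTop ℕ∞} (hw : ContDiff ℝ (n + 1) (uncurry w)) :
    ContDiff ℝ n (uncurry (spaceDeriv w)) := by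
  rw [_root_.uncurry_spaceDeriv (hw.differentiable (by simp))]
  exact (hw.fderiv_right le_rfl).clm_apply contDiff_const

theorem timeDeriv_spaceDeriv (hw : ContDiff ℝ 2 (uncurry w)) :
    timeDeriv (spaceDeriv w) = spaceDeriv (timeDeriv w) := by
  ext t x
  have hd := hw.differentiable (by simp)
  have h_comm := VectorField.fderiv_apply_lieBracket (V := fun _ => ((1 : ℝ), (0 : ℝ)))
    (W := fun _ => ((0 : ℝ), (1 : ℝ))) hw.contDiffAt (by simp) (differentiableAt_const _)
    (differentiableAt_const _) (x := (t, x))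
  simp only [VectorField.lieBracket, fderiv_fun_const, Pi.zero_apply, zero_apply,
    sub_self, map_zero] at h_comm
  rw [timeDeriv_eq_fderiv ((hw.uncurry_spaceDeriv (n := 1)).differentiable (by simp) _),
    spaceDeriv_eq_fderiv ((hw.uncurry_timeDeriv (n := 1)).differentiable (by simp) _),
    uncurry_spaceDeriv hd, uncurry_timeDeriv hd]
  exact sub_eq_zero.mp h_comm.symm

theorem iteratedDeriv_two_time : iteratedDeriv 2 (w · x) t = timeDeriv (timeDeriv w) t x := by
  simp only [iteratedDeriv_succ, iteratedDeriv_zero]; rfl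

theorem iteratedDeriv_two_space : iteratedDeriv 2 (w t ·) x = spaceDeriv (spaceDeriv w) t x := by
  simp only [iteratedDeriv_succ, iteratedDeriv_zero]; rfl

end PartialDerivatives

noncomputable def waveEnergyDensity (m : ℝ → ℝ) (v : ℝ → ℝ → ℝ) (t x : ℝ) : ℝ :=
  timeDeriv v t x ^ 2 + spaceDeriv v t x ^ 2 + m x * v t x ^ 2

noncomputable def waveEnergy (m : ℝ → ℝ) (v : ℝ → ℝ → ℝ) (t : ℝ) : ℝ :=
  ∫ x, waveEnergyDensity m v t x

section WaveEnergy

variable {T R t x : ℝ} {m : ℝ → ℝ} {v : ℝ → ℝ → ℝ}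

theorem timeDeriv_eq_zero_of_le_abs (hT : 0 < T) (hv : Differentiable ℝ (uncurry v))
    (hsupp : ∀ s ∈ Icc 0 T, ∀ y, R ≤ |y| → v s y = 0) (ht : t ∈ Icc 0 T) (hx : R ≤ |x|) :
    timeDeriv v t x = 0 :=
  deriv_eq_zero_of_eqOn_zero (hasDerivAt_timeDeriv (hv _)).differentiableAt
    (uniqueDiffOn_Icc hT t ht) ht fun s hs => hsupp s hs x hx

theorem spaceDeriv_eq_zero_of_le_abs (hv : Differentiable ℝ (uncurry v))
    (hsupp : ∀ s ∈ Icc 0 T, ∀ y, R ≤ |y| → v s y = 0) (ht : t ∈ Icc 0 T) (hx : R ≤ |x|) :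
    spaceDeriv v t x = 0 :=
  deriv_eq_zero_of_eqOn_zero (hasDerivAt_spaceDeriv (hv _)).differentiableAt
    (uniqueDiffWithinAt_setOf_le_abs hx) hx fun y hy => hsupp t ht y hy

theorem waveEnergyDensity_eq_zero_of_le_abs (hT : 0 < T) (hv : Differentiable ℝ (uncurry v))
    (hsupp : ∀ s ∈ Icc 0 T, ∀ y, R ≤ |y| → v s y = 0) (ht : t ∈ Icc 0 T) (hx : R ≤ |x|) :
    waveEnergyDensity m v t x = 0 := by
  simp [waveEnergyDensity, timeDeriv_eq_zero_of_le_abs hT hv hsupp ht hx,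
    spaceDeriv_eq_zero_of_le_abs hv hsupp ht hx, hsupp t ht x hx]

theorem intervalIntegral_waveEnergyDensity_eq (hm : Continuous m) (hv : ContDiff ℝ 2 (uncurry v))
    (hsupp : ∀ s ∈ Icc 0 T, ∀ y, R ≤ |y| → v s y = 0)
    (hwave : ∀ s ∈ Icc 0 T, ∀ y,
      timeDeriv (timeDeriv v) s y = spaceDeriv (spaceDeriv v) s y - m y * v s y)
    (ht : t ∈ Icc 0 T) :
    ∫ x in -R..R, waveEnergyDensity m v t x = ∫ x in -R..R, waveEnergyDensity m v 0 x := by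
  have hv₁ : ContDiff ℝ 1 (uncurry v) := hv.of_le one_le_two
  have hvt : ContDiff ℝ 1 (uncurry (timeDeriv v)) := hv.uncurry_timeDeriv (n := 1)
  have hvx : ContDiff ℝ 1 (uncurry (spaceDeriv v)) := hv.uncurry_spaceDeriv (n := 1)
  have hv_d := hv₁.differentiable one_ne_zero
  have hvt_d := hvt.differentiable one_ne_zero
  have hvx_d := hvx.differentiable one_ne_zero
  have hv_c := hv₁.continuous
  have hvt_c := hvt.continuous
  have hvx_c := hvx.continuous
  have hvtt_c := (hvt.uncurry_timeDeriv (n := 0)).continuous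
  have hvxt_c := (hvx.uncurry_timeDeriv (n := 0)).continuous
  refine intervalIntegral_eq_of_hasDerivAt_of_hasDerivAt
    (g := fun s y => 2 * timeDeriv v s y * timeDeriv (timeDeriv v) s y
      + 2 * spaceDeriv v s y * timeDeriv (spaceDeriv v) s y + m y * (2 * v s y * timeDeriv v s y))
    (F := fun s y => 2 * timeDeriv v s y * spaceDeriv v s y) ?_ ?_ ?_ ?_ ?_
  · show Continuous fun p : ℝ × ℝ =>
      uncurry (timeDeriv v) p ^ 2 + uncurry (spaceDeriv v) p ^ 2 + m p.2 * uncurry v p ^ 2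
    fun_prop
  · show Continuous fun p : ℝ × ℝ =>
      2 * uncurry (timeDeriv v) p * uncurry (timeDeriv (timeDeriv v)) p
      + 2 * uncurry (spaceDeriv v) p * uncurry (timeDeriv (spaceDeriv v)) p
      + m p.2 * (2 * uncurry v p * uncurry (timeDeriv v) p)
    fun_prop
  · intro s _ y _
    have h := ((hasDerivAt_timeDeriv (hvt_d (s, y))).pow 2).add
      ((hasDerivAt_timeDeriv (hvx_d (s, y))).pow 2) |>.add
      (((hasDerivAt_timeDeriv (hv_d (s, y))).pow 2).const_mul (m y))
    refine h.congr_deriv ?_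
    push_cast
    ring
  · intro s hs y _
    rw [uIcc_of_le ht.1] at hs
    have h := ((hasDerivAt_spaceDeriv (hvt_d (s, y))).const_mul 2).mul
      (hasDerivAt_spaceDeriv (hvx_d (s, y)))
    refine h.congr_deriv ?_
    rw [hwave s ⟨hs.1, hs.2.trans ht.2⟩ y, timeDeriv_spaceDeriv hv]
    ring
  · intro s hs
    rw [uIcc_of_le ht.1] at hs
    have hs' : s ∈ Icc 0 T := ⟨hs.1, hs.2.trans ht.2⟩
    simp only [spaceDeriv_eq_zero_of_le_abs hv_d hsupp hs' (le_abs_self R),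
      spaceDeriv_eq_zero_of_le_abs hv_d hsupp hs' (abs_neg R ▸ le_abs_self R), mul_zero]

theorem IsClassicalSolution.waveEnergy_eq (hT : 0 < T) (hm : Continuous m)
    (hv : IsClassicalSolution T m (fun _ _ => 0) v) (ht : t ∈ Icc 0 T) :
    waveEnergy m v t = waveEnergy m v 0 := by
  obtain ⟨hv₂, ⟨R, hR, hsupp⟩, hpde⟩ := hv
  have hd : Differentiable ℝ (uncurry v) := hv₂.differentiable two_ne_zero
  have hwave : ∀ s ∈ Icc 0 T, ∀ y,
      timeDeriv (timeDeriv v) s y = spaceDeriv (spaceDeriv v) s y - m y * v s y := fun s hs y => by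
    simpa only [iteratedDeriv_two_time, iteratedDeriv_two_space, add_zero] using hpde s hs y
  rw [waveEnergy, waveEnergy,
    integral_eq_intervalIntegral_of_eq_zero_of_le_abs hR.le
      fun x => waveEnergyDensity_eq_zero_of_le_abs hT hd hsupp ht,
    integral_eq_intervalIntegral_of_eq_zero_of_le_abs hR.le
      fun x => waveEnergyDensity_eq_zero_of_le_abs hT hd hsupp ⟨le_rfl, hT.le⟩]
  exact intervalIntegral_waveEnergyDensity_eq hm hv₂ hsupp hwave ht

theorem IsClassicalSolution.integral_sq_timeDeriv_add_integral_sq_spaceDeriv_le_waveEnergy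
    {f : ℝ → ℝ → ℝ} (hT : 0 < T) (hm : Continuous m) (hm₀ : ∀ x, 0 ≤ m x)
    (hv : IsClassicalSolution T m f v) (ht : t ∈ Icc 0 T) :
    (∫ x, timeDeriv v t x ^ 2) + (∫ x, spaceDeriv v t x ^ 2) ≤ waveEnergy m v t := by
  obtain ⟨hv₂, ⟨R, -, hsupp⟩, -⟩ := hv
  have hd : Differentiable ℝ (uncurry v) := hv₂.differentiable two_ne_zero
  have hvt : Integrable fun x => timeDeriv v t x ^ 2 :=
    integrable_of_continuous_of_eq_zero_of_le_abs (R := R)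
      (((hv₂.uncurry_timeDeriv (n := 1)).continuous.uncurry_left t).pow 2)
      fun x hx => by simp [timeDeriv_eq_zero_of_le_abs hT hd hsupp ht hx]
  have hvx : Integrable fun x => spaceDeriv v t x ^ 2 :=
    integrable_of_continuous_of_eq_zero_of_le_abs (R := R)
      (((hv₂.uncurry_spaceDeriv (n := 1)).continuous.uncurry_left t).pow 2)
      fun x hx => by simp [spaceDeriv_eq_zero_of_le_abs hd hsupp ht hx]
  have hmv : Integrable fun x => m x * v t x ^ 2 :=
    integrable_of_continuous_of_eq_zero_of_le_abs (R := R)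
      (hm.mul ((hv₂.continuous.uncurry_left t).pow 2))
      fun x hx => by simp [hsupp t ht x hx]
  rw [← integral_add hvt hvx]
  exact integral_mono (hvt.add hvx) ((hvt.add hvx).add hmv)
    fun x => le_add_of_nonneg_right (mul_nonneg (hm₀ x) (sq_nonneg _))

theorem waveEnergy_zero_le {u₀ u₁ : ℝ → ℝ} {M : ℝ} (hm : Continuous m) (hmM : ∀ x, m x ≤ M)
    (hu₀ : ContDiff ℝ 1 u₀) (hu₀s : HasCompactSupport u₀)
    (hu₁ : Continuous u₁) (hu₁s : HasCompactSupport u₁)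
    (h₀ : ∀ x, v 0 x = u₀ x) (h₁ : ∀ x, timeDeriv v 0 x = u₁ x) :
    waveEnergy m v 0 ≤ (∫ x, u₁ x ^ 2) + (∫ x, deriv u₀ x ^ 2) + M * ∫ x, u₀ x ^ 2 := by
  have hsq_supp {g : ℝ → ℝ} (hgs : HasCompactSupport g) : HasCompactSupport fun x => g x ^ 2 :=
    hgs.comp_left (g := fun y : ℝ => y ^ 2) (zero_pow two_ne_zero)
  have hsq {g : ℝ → ℝ} (hg : Continuous g) (hgs : HasCompactSupport g) :
      Integrable fun x => g x ^ 2 :=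
    (hg.pow 2).integrable_of_hasCompactSupport (hsq_supp hgs)
  have hu₁' := hsq hu₁ hu₁s
  have hu₀' := hsq (hu₀.continuous_deriv le_rfl) hu₀s.deriv
  have hu₀'' := hsq hu₀.continuous hu₀s
  have hmu₀ : Integrable fun x => m x * u₀ x ^ 2 :=
    (hm.mul (hu₀.continuous.pow 2)).integrable_of_hasCompactSupport
      (hsq_supp hu₀s).mul_left
  have hv₀ : v 0 = u₀ := funext h₀
  have hu : Integrable fun x => u₁ x ^ 2 + deriv u₀ x ^ 2 := hu₁'.add hu₀'
  calc waveEnergy m v 0 = ∫ x, u₁ x ^ 2 + deriv u₀ x ^ 2 + m x * u₀ x ^ 2 := by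
        simp only [waveEnergy, waveEnergyDensity, spaceDeriv, h₁, hv₀]
    _ ≤ ∫ x, u₁ x ^ 2 + deriv u₀ x ^ 2 + M * u₀ x ^ 2 :=
        integral_mono (hu.add hmu₀) (hu.add (hu₀''.const_mul M))
          fun x => add_le_add_right (mul_le_mul_of_nonneg_right (hmM x) (sq_nonneg _)) _
    _ = (∫ x, u₁ x ^ 2) + (∫ x, deriv u₀ x ^ 2) + M * ∫ x, u₀ x ^ 2 := by
        rw [integral_add hu (hu₀''.const_mul M), integral_add hu₁' hu₀', integral_const_mul]

end WaveEnergy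

/-- Existence/moderateness of the very weak solution net (case `α = 1`,
`d = 1`): if `0 ≤ m_ε ≤ C ε^{-N₀}` and `u_ε` are classical solutions with
potentials `m_ε` and common compactly supported `C¹ × C⁰` Cauchy data, then
there is `c > 0` with
`‖∂_t u_ε(t,·)‖² + ‖∂_x u_ε(t,·)‖² ≤ c ε^{-N₀}` for all `ε ∈ (0,1]`,
`t ∈ [0,T]`. -/
theorem very_weak_solution_existence_moderate
    (T : ℝ) (hT : 0 < T) (N₀ : ℕ) (C : ℝ) (hC : 0 < C)
    (m : ℝ → ℝ → ℝ) (u : ℝ → ℝ → ℝ → ℝ) (u₀ u₁ : ℝ → ℝ)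
    (hu₀ : ContDiff ℝ 1 u₀) (hu₀s : HasCompactSupport u₀)
    (hu₁ : Continuous u₁) (hu₁s : HasCompactSupport u₁)
    (hm : ∀ ε ∈ Set.Ioc (0 : ℝ) 1,
      Continuous (m ε) ∧ ∀ x : ℝ, 0 ≤ m ε x ∧ m ε x ≤ C * (ε ^ N₀)⁻¹)
    (hu : ∀ ε ∈ Set.Ioc (0 : ℝ) 1, IsClassicalSolution T (m ε) (fun _ _ => 0) (u ε))
    (hdata : ∀ ε ∈ Set.Ioc (0 : ℝ) 1, ∀ x : ℝ,
      u ε 0 x = u₀ x ∧ deriv (fun τ => u ε τ x) 0 = u₁ x) :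
    ∃ c > (0 : ℝ), ∀ ε ∈ Set.Ioc (0 : ℝ) 1, ∀ t ∈ Set.Icc (0 : ℝ) T,
      (∫ x : ℝ, (deriv (fun τ => u ε τ x) t) ^ 2) +
        (∫ x : ℝ, (deriv (fun y => u ε t y) x) ^ 2) ≤ c * (ε ^ N₀)⁻¹ := by
  set A := (∫ x, u₁ x ^ 2) + ∫ x, deriv u₀ x ^ 2
  set B := ∫ x, u₀ x ^ 2
  have hA : 0 ≤ A := by positivity
  have hB : 0 ≤ B := by positivity
  refine ⟨A + C * B + 1, by positivity, fun ε hε t ht => ?_⟩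
  obtain ⟨hmε, hmε_bound⟩ := hm ε hε
  have hε_inv : 1 ≤ (ε ^ N₀)⁻¹ := one_le_inv₀ (pow_pos hε.1 _) |>.mpr (pow_le_one₀ hε.1.le hε.2)
  calc _ ≤ waveEnergy (m ε) (u ε) t :=
        (hu ε hε).integral_sq_timeDeriv_add_integral_sq_spaceDeriv_le_waveEnergy hT hmε
          (fun x => (hmε_bound x).1) ht
    _ = waveEnergy (m ε) (u ε) 0 := (hu ε hε).waveEnergy_eq hT hmε ht
    _ ≤ A + C * (ε ^ N₀)⁻¹ * B :=
        waveEnergy_zero_le hmε (fun x => (hmε_bound x).2) hu₀ hu₀s hu₁ hu₁s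
          (fun x => (hdata ε hε x).1) (fun x => (hdata ε hε x).2)
    _ ≤ (A + C * B + 1) * (ε ^ N₀)⁻¹ := by nlinarith [mul_nonneg hC.le hB]
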